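/- arXiv:0901.2279 — 4 statements merged into one kernel-verified Lean document; each statement's English description precedes it below -/
import Mathlib

section
/- Let T be a compact operator on a Banach space M over a complete nonarchimedean field E, and λ ∈ E nonzero. Then the generalized λ-eigenspace of T, i.e. the union over m of ker((T − λ)^m), is finite-dimensional. -/
/-!
Write `g = T - λ`. Since `g ^ m - (-λ) ^ m` is compact, `ker (g ^ m)` is an eigenspace of a
compact operator for a nonzero eigenvalue; the identity of it is compact, so it is
finite-dimensional. The chain `ker (g ^ m)` stabilizes by Riesz's argument: otherwise Riesz's
lemma gives a bounded sequence `u n ∈ ker (g ^ (n + 1))` at distance `≥ 1` from `ker (g ^ n)`,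
and for `m < n` the difference `T u n - T u m` lies in `λ • u n + ker (g ^ n)`, so the images
`T u n` are `‖λ‖`-separated, contradicting compactness. Hence the generalized eigenspace is one
of the `ker (g ^ m)`.
-/

open Module

theorem StrictMono.exists_seq_bounded_one_le_norm_sub {𝕜 X : Type*} [NontriviallyNormedField 𝕜]
    [NormedAddCommGroup X] [NormedSpace 𝕜 X] {V : ℕ → Submodule 𝕜 X} (hV : StrictMono V)
    (hVc : ∀ n, IsClosed (V n : Set X)) :
    ∃ R, ∃ u : ℕ → X, ∀ n, u n ∈ V (n + 1) ∧ ‖u n‖ ≤ R ∧ ∀ y ∈ V n, 1 ≤ ‖u n - y‖ := by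
  obtain ⟨c, hc⟩ := NormedField.exists_one_lt_norm 𝕜
  have (n : ℕ) : ∃ x ∈ V (n + 1), ‖x‖ ≤ ‖c‖ + 1 ∧ ∀ y ∈ V n, 1 ≤ ‖x - y‖ := by
    obtain ⟨x, hxV, hx⟩ := SetLike.exists_of_lt (hV n.lt_succ_self)
    obtain ⟨x₀, hx₀R, hx₀⟩ := riesz_lemma_of_norm_lt hc (lt_add_one _)
      (F := (V n).comap (V (n + 1)).subtype) ((hVc n).preimage continuous_subtype_val)
      ⟨⟨x, hxV⟩, hx⟩
    exact ⟨x₀, x₀.2, hx₀R, fun y hy => hx₀ ⟨y, hV.monotone n.le_succ hy⟩ hy⟩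
  choose u hu using this
  exact ⟨_, u, hu⟩

namespace IsCompactOperator

variable {𝕜 X : Type*} [NontriviallyNormedField 𝕜] [NormedAddCommGroup X] [NormedSpace 𝕜 X]
  {f : End 𝕜 X} {μ : 𝕜}

theorem continuous_sub_smul_one_pow (hf : IsCompactOperator f) (μ : 𝕜) (m : ℕ) :
    Continuous ⇑((f - μ • 1) ^ m) := by
  rw [End.coe_pow]
  exact Continuous.iterate (hf.continuous.sub (continuous_const_smul μ) :) m

theorem sub_smul_one_pow_sub (hf : IsCompactOperator f) (μ : 𝕜) (m : ℕ) :
    IsCompactOperator ⇑((f - μ • 1) ^ m - (-μ) ^ m • 1) := by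
  induction m with
  | zero => rw [pow_zero, pow_zero, one_smul, sub_self]; exact isCompactOperator_zero
  | succ m ih =>
    set D := (f - μ • 1) ^ m - (-μ) ^ m • 1
    have hD : (f - μ • 1) ^ (m + 1) - (-μ) ^ (m + 1) • 1 = f * D - μ • D + (-μ) ^ m • f := by
      simp only [D, pow_succ', mul_sub, sub_mul, smul_sub, mul_smul_comm, smul_mul_assoc,
        one_mul, mul_one, smul_smul]
      module
    rw [hD]
    exact ((ih.continuous_comp hf.continuous).sub (ih.smul μ)).add (hf.smul _)

theorem finiteDimensional_ker_sub_smul [CompleteSpace 𝕜] (hf : IsCompactOperator f)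
    (hμ : μ ≠ 0) : FiniteDimensional 𝕜 (LinearMap.ker (f - μ • 1)) := by
  set V := LinearMap.ker (f - μ • 1)
  have hfV : ∀ x ∈ V, f x = μ • x := fun x hx => by simpa [V, sub_eq_zero] using hx
  have hV : ∀ x ∈ V, f x ∈ V := fun x hx => hfV x hx ▸ V.smul_mem μ hx
  have hVc : IsClosed (V : Set X) :=
    isClosed_singleton.preimage (by simpa using hf.continuous_sub_smul_one_pow μ 1)
  have hid : (id : V → V) = μ⁻¹ • ⇑(f.restrict hV) := by
    funext x; ext; simp [hfV x x.2, hμ]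
  exact .of_isCompactOperator_id (hid ▸ (hf.restrict hV hVc).smul μ⁻¹)

theorem finiteDimensional_ker_sub_smul_pow [CompleteSpace 𝕜] (hf : IsCompactOperator f)
    (hμ : μ ≠ 0) (m : ℕ) : FiniteDimensional 𝕜 (LinearMap.ker ((f - μ • 1) ^ m)) := by
  have h := (hf.sub_smul_one_pow_sub μ m).finiteDimensional_ker_sub_smul
    (μ := -(-μ) ^ m) (by simp [hμ])
  rwa [neg_smul, sub_neg_eq_add, sub_add_cancel] at h

theorem exists_lt_norm_apply_sub_apply_lt {Y : Type*} [NormedAddCommGroup Y] [NormedSpace 𝕜 Y]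
    {g : X →ₗ[𝕜] Y} (hg : IsCompactOperator g) {u : ℕ → X} {R : ℝ} (hu : ∀ n, ‖u n‖ ≤ R)
    {ε : ℝ} (hε : 0 < ε) : ∃ m n, m < n ∧ ‖g (u n) - g (u m)‖ < ε := by
  obtain ⟨K, hK, hgK⟩ := hg.image_closedBall_subset_compact R
  obtain ⟨_, -, φ, hφ, hlim⟩ := hK.tendsto_subseq fun n => hgK ⟨u n, by simpa using hu n, rfl⟩
  obtain ⟨N, hN⟩ := Metric.cauchySeq_iff'.1 hlim.cauchySeq ε hε
  exact ⟨φ N, φ (N + 1), hφ N.lt_succ_self, by simpa [dist_eq_norm] using hN (N + 1) N.le_succ⟩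

theorem exists_succ_le_of_sub_smul_mapsTo (hf : IsCompactOperator f) (hμ : μ ≠ 0)
    {V : ℕ → Submodule 𝕜 X} (hV : Monotone V) (hVc : ∀ n, IsClosed (V n : Set X))
    (hfV : ∀ n, ∀ x ∈ V (n + 1), (f - μ • 1) x ∈ V n) : ∃ n, V (n + 1) ≤ V n := by
  by_contra! h
  obtain ⟨R, u, hu⟩ := (strictMono_nat_of_lt_succ fun n =>
    lt_of_le_not_ge (hV n.le_succ) (h n)).exists_seq_bounded_one_le_norm_sub hVc
  obtain ⟨m, n, hmn, hlt⟩ :=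
    hf.exists_lt_norm_apply_sub_apply_lt (fun n => (hu n).2.1) (norm_pos_iff.2 hμ)
  set w := (f - μ • 1) (u m) + μ • u m - (f - μ • 1) (u n)
  have hw : w ∈ V n := by
    refine sub_mem (add_mem ?_ ?_) (hfV n _ (hu n).1)
    · exact hV hmn.le (hfV m _ (hu m).1)
    · exact (V n).smul_mem μ (hV hmn (hu m).1)
  have hsep : f (u n) - f (u m) = μ • (u n - μ⁻¹ • w) := by
    simp only [w, smul_sub, smul_inv_smul₀ hμ, LinearMap.sub_apply, LinearMap.smul_apply,
      End.one_apply]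
    abel
  have := (hu n).2.2 _ ((V n).smul_mem μ⁻¹ hw)
  rw [hsep, norm_smul] at hlt
  nlinarith [norm_nonneg μ]

theorem exists_ker_sub_smul_pow_succ_le (hf : IsCompactOperator f) (hμ : μ ≠ 0) :
    ∃ n, LinearMap.ker ((f - μ • 1) ^ (n + 1)) ≤ LinearMap.ker ((f - μ • 1) ^ n) :=
  hf.exists_succ_le_of_sub_smul_mapsTo hμ (f - μ • 1).iterateKer.monotone
    (fun n => isClosed_singleton.preimage (hf.continuous_sub_smul_one_pow μ n))
    (fun n x hx => by simpa [pow_succ, End.mul_apply] using hx)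

end IsCompactOperator

theorem Module.End.iSup_ker_pow_eq_of_ker_pow_succ_le {K V : Type*} [DivisionRing K]
    [AddCommGroup V] [Module K V] {f : End K V} {k : ℕ}
    (h : LinearMap.ker (f ^ (k + 1)) ≤ LinearMap.ker (f ^ k)) :
    ⨆ m, LinearMap.ker (f ^ m) = LinearMap.ker (f ^ k) := by
  have hk := End.ker_pow_constant ((f.iterateKer.monotone k.le_succ).antisymm h)
  calc ⨆ m, LinearMap.ker (f ^ m) = ⨆ m, LinearMap.ker (f ^ (m + k)) :=
        (f.iterateKer.monotone.iSup_nat_add k).symm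
    _ = LinearMap.ker (f ^ k) := by simp only [add_comm _ k, ← hk, ciSup_const]

theorem compact_operator_generalized_eigenspace_finiteDimensional_general
    {E M : Type*} [NontriviallyNormedField E] [CompleteSpace E]
    [NormedAddCommGroup M] [NormedSpace E M]
    (T : M →L[E] M) (hT : IsCompactOperator ⇑T) (lam : E) (hlam : lam ≠ 0) :
    FiniteDimensional E
      ↥(⨆ m : ℕ, LinearMap.ker (((T : M →ₗ[E] M) - lam • LinearMap.id) ^ m)) := by
  have hf : IsCompactOperator (T : End E M) := hT
  obtain ⟨k, hk⟩ := hf.exists_ker_sub_smul_pow_succ_le hlam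
  rw [← End.one_eq_id, End.iSup_ker_pow_eq_of_ker_pow_succ_le hk]
  exact hf.finiteDimensional_ker_sub_smul_pow hlam k

/-- The generalized `λ`-eigenspace (`λ ≠ 0`) of a compact operator on a Banach space
over a complete nonarchimedean field is finite-dimensional. -/
theorem compact_operator_generalized_eigenspace_finiteDimensional
    {E M : Type*} [NontriviallyNormedField E] [CompleteSpace E] [IsUltrametricDist E]
    [NormedAddCommGroup M] [NormedSpace E M] [CompleteSpace M]
    (T : M →L[E] M) (hT : IsCompactOperator ⇑T) (lam : E) (hlam : lam ≠ 0) :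
    FiniteDimensional E
      ↥(⨆ m : ℕ, LinearMap.ker (((T : M →ₗ[E] M) - lam • LinearMap.id) ^ m)) :=
  compact_operator_generalized_eigenspace_finiteDimensional_general T hT lam hlam
end

section
/- Let i : M → M' be an injective continuous linear map of Banach spaces over a nonarchimedean field E, and T an operator acting compatibly on M and M' (i.e. i ∘ T = T ∘ i) such that T : M' → M' factors as i ∘ T_0 for a continuous map T_0 : M' → M with T_0 ∘ i = T on M. Then for any nonzero λ ∈ E, i restricts to an isomorphism from the generalized λ-eigenspace of T on M onto the generalized λ-eigenspace of T on M', provided the latter equals ker((T−λ)^m) for some m. (Eigenvectors of nonzero eigenvalue automatically 'descend' through T_0.) -/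
/-- If `i : M → M'` is injective and continuous, `T, T'` are compatible compact
operators with `T' = i ∘ T₀` and `T₀ ∘ i = T`, then for nonzero `λ`, `i` restricts to
an isomorphism of the generalized `λ`-eigenspace of `T` onto that of `T'`, provided
the latter equals `ker((T'−λ)^m)` for some `m`. -/
theorem generalized_eigenspace_descends
    {E M M' : Type*} [NontriviallyNormedField E] [CompleteSpace E]
    [NormedAddCommGroup M] [NormedSpace E M] [CompleteSpace M]
    [NormedAddCommGroup M'] [NormedSpace E M'] [CompleteSpace M']
    (i : M →L[E] M') (hi : Function.Injective ⇑i)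
    (T : M →L[E] M) (T' : M' →L[E] M') (T₀ : M' →L[E] M)
    (hTc : IsCompactOperator ⇑T) (hT'c : IsCompactOperator ⇑T')
    (hcomm : ∀ x, i (T x) = T' (i x))
    (hfact : ∀ y, T' y = i (T₀ y))
    (hT₀ : ∀ x, T₀ (i x) = T x)
    (lam : E) (hlam : lam ≠ 0) (m : ℕ) (hm : 1 ≤ m)
    (hgen : (⨆ k : ℕ, LinearMap.ker (((T' : M' →ₗ[E] M') - lam • LinearMap.id) ^ k))
      = LinearMap.ker (((T' : M' →ₗ[E] M') - lam • LinearMap.id) ^ m)) :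
    Submodule.map (i : M →ₗ[E] M')
        (⨆ k : ℕ, LinearMap.ker (((T : M →ₗ[E] M) - lam • LinearMap.id) ^ k))
      = ⨆ k : ℕ, LinearMap.ker (((T' : M' →ₗ[E] M') - lam • LinearMap.id) ^ k) := by
  set S : M →ₗ[E] M := (T : M →ₗ[E] M) - lam • LinearMap.id with hS
  set S' : M' →ₗ[E] M' := (T' : M' →ₗ[E] M') - lam • LinearMap.id with hS'
  have hcomm1 : ∀ x, i (S x) = S' (i x) := by
    intro x
    simp [hS, hS', map_sub, hcomm]
  have hcommk : ∀ (k : ℕ) (x : M), i ((S ^ k) x) = (S' ^ k) (i x) := by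
    intro k
    induction k with
    | zero => intro x; simp
    | succ n ih =>
      intro x
      rw [pow_succ, pow_succ]
      simp only [Module.End.mul_apply]
      rw [ih, hcomm1]
  have hdesc : ∀ (k : ℕ) (y : M'), (S' ^ k) y = 0 → ∃ x : M, i x = y := by
    intro k
    induction k with
    | zero => intro y hy; simp at hy; exact ⟨0, by simp [hy]⟩
    | succ n ih =>
      intro y hy
      obtain ⟨x', hx'⟩ := ih (S' y) (by
        rw [← Module.End.mul_apply, ← pow_succ]; exact hy)
      refine ⟨lam⁻¹ • (T₀ y - x'), ?_⟩
      have h1 : S' y = T' y - lam • y := by simp [hS']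
      have h2 : i x' = i (T₀ y) - lam • y := by rw [hx', h1, hfact]
      have hy' : lam • y = i (T₀ y) - i x' := by rw [h2]; abel
      calc i (lam⁻¹ • (T₀ y - x')) = lam⁻¹ • (i (T₀ y) - i x') := by
            rw [map_smul, map_sub]
        _ = lam⁻¹ • (lam • y) := by rw [hy']
        _ = y := by rw [smul_smul, inv_mul_cancel₀ hlam, one_smul]
  apply le_antisymm
  · rw [Submodule.map_iSup]
    apply iSup_le
    intro k
    refine le_trans ?_ (le_iSup _ k)
    rintro y ⟨x, hx, rfl⟩
    simp only [LinearMap.mem_ker, ContinuousLinearMap.coe_coe] at hx ⊢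
    rw [← hcommk, hx, map_zero]
  · rw [hgen]
    intro y hy
    rw [LinearMap.mem_ker] at hy
    obtain ⟨x, rfl⟩ := hdesc m y hy
    refine ⟨x, ?_, by simp⟩
    apply Submodule.mem_iSup_of_mem m
    rw [LinearMap.mem_ker]
    apply hi
    rw [hcommk, hy, map_zero]
end

section
/- Consequently (control theorem, abstract form): let M be a nonarchimedean Banach space, N ⊆ M a closed T-stable subspace for a continuous operator T, and suppose the induced operator on M/N has operator norm < |λ|. Then the generalized λ-eigenspace of T on M is contained in N. -/
/-- Control theorem, abstract form: if `N ⊆ M` is a closed `T`-stable subspace and the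
operator induced by `T` on `M/N` has operator norm `< |λ|`, then the generalized
`λ`-eigenspace of `T` on `M` is contained in `N`. -/
theorem control_theorem_abstract
    {E M : Type*} [NontriviallyNormedField E] [IsUltrametricDist E]
    [NormedAddCommGroup M] [NormedSpace E M] [CompleteSpace M]
    (T : M →L[E] M) (N : Submodule E M) (hNc : IsClosed (N : Set M))
    (hTN : ∀ x ∈ N, T x ∈ N)
    (lam : E) (hlam : lam ≠ 0)
    (Tbar : (M ⧸ N) →L[E] (M ⧸ N))
    (hTbar : ∀ x : M, Tbar (N.mkQ x) = N.mkQ (T x))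
    (hnorm : ‖Tbar‖ < ‖lam‖) :
    (⨆ m : ℕ, LinearMap.ker (((T : M →ₗ[E] M) - lam • LinearMap.id) ^ m)) ≤ N := by
  have key : ∀ (k : ℕ) (x : M),
      (((T : M →ₗ[E] M) - lam • (LinearMap.id : M →ₗ[E] M)) ^ k) x = 0 → x ∈ N := by
    intro k
    induction k with
    | zero =>
      intro x hx
      simp only [pow_zero, Module.End.one_apply] at hx
      simpa [hx] using N.zero_mem
    | succ k ih =>
      intro x hx
      rw [pow_succ, Module.End.mul_apply] at hx
      have hmem : ((T : M →ₗ[E] M) - lam • (LinearMap.id : M →ₗ[E] M)) x ∈ N := ih _ hx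
      have hq : N.mkQ (T x - lam • x) = 0 := by
        rw [Submodule.mkQ_apply, Submodule.Quotient.mk_eq_zero]
        simpa using hmem
      have heq : Tbar (N.mkQ x) = lam • N.mkQ x := by
        have := hq
        rw [map_sub, map_smul, sub_eq_zero] at this
        rw [hTbar]; exact this
      have hle : ‖lam‖ * ‖N.mkQ x‖ ≤ ‖Tbar‖ * ‖N.mkQ x‖ := by
        calc ‖lam‖ * ‖N.mkQ x‖ = ‖lam • N.mkQ x‖ := (norm_smul _ _).symm
        _ = ‖Tbar (N.mkQ x)‖ := by rw [heq]
        _ ≤ ‖Tbar‖ * ‖N.mkQ x‖ := Tbar.le_opNorm _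
      have hz : ‖N.mkQ x‖ = 0 := by
        by_contra h
        have hpos : 0 < ‖N.mkQ x‖ := lt_of_le_of_ne (norm_nonneg _) (Ne.symm h)
        nlinarith
      have : N.mkQ x = 0 := norm_eq_zero.mp hz
      rwa [Submodule.mkQ_apply, Submodule.Quotient.mk_eq_zero] at this
  exact iSup_le fun m x hx => key m x hx
end

section
/- Let X be a finitely generated abelian group and Σ ≤ X a finite-index subgroup. Let f₁,…,f_r : X ⊗ ℚ → ℝ be linearly independent linear functionals. Then the set {x ∈ Σ : f_i(x) < 0 for all i} is nonempty and contains a basis of Σ ⊗ ℚ. -/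
open TensorProduct

/-- If `Σ` is a finite-index subgroup of a finitely generated abelian group `X` and
`f₁,…,f_r` are linearly independent real-valued linear functionals, then
`{x ∈ Σ : f_i(x) < 0 ∀ i}` is nonempty and contains a basis of `Σ ⊗ ℚ`
(viewed inside `ℚ ⊗[ℤ] X`). -/
theorem cone_contains_basis {X : Type*} [AddCommGroup X] [AddGroup.FG X]
    (Sig : AddSubgroup X) (hfin : Sig.index ≠ 0)
    {r : ℕ} (f : Fin r → (X →+ ℝ))
    (hind : LinearIndependent ℝ (fun i => ⇑(f i))) :
    (∃ x ∈ Sig, ∀ i, f i x < 0) ∧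
    ∃ b : Set X, b ⊆ {x | x ∈ Sig ∧ ∀ i, f i x < 0} ∧
      LinearIndependent ℚ (fun x : b => ((1 : ℚ) ⊗ₜ[ℤ] (x : X) : ℚ ⊗[ℤ] X)) ∧
      Submodule.span ℚ ((fun x : X => ((1 : ℚ) ⊗ₜ[ℤ] x : ℚ ⊗[ℤ] X)) '' b)
        = Submodule.span ℚ ((fun x : X => ((1 : ℚ) ⊗ₜ[ℤ] x : ℚ ⊗[ℤ] X)) '' (Sig : Set X)) := by
  classical
  haveI : Module.Finite ℤ X := Module.Finite.iff_addGroup_fg.mpr ‹_›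
  -- the evaluation map `X → ℝ^r`
  set Ψ : X →+ (Fin r → ℝ) :=
    { toFun := fun x i => f i x
      map_zero' := by ext i; simp
      map_add' := by intro x y; ext i; simp } with hΨdef
  have hΨ : ∀ (x : X) (i : Fin r), Ψ x i = f i x := fun x i => rfl
  -- Step 1 : `Ψ '' Sig` spans `ℝ^r`
  have hspan : Submodule.span ℝ (Ψ '' (Sig : Set X)) = ⊤ := by
    by_contra hne
    obtain ⟨φ, hφ0, hφ⟩ :=
      Submodule.exists_dual_map_eq_bot_of_lt_top (lt_top_iff_ne_top.mpr hne) inferInstance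
    set c : Fin r → ℝ := fun i => φ (Pi.single i 1) with hcdef
    have hφx : ∀ v : Fin r → ℝ, φ v = ∑ i, v i * c i := by
      intro v
      have hv : v = ∑ i, v i • (Pi.single i (1 : ℝ) : Fin r → ℝ) := by
        conv_lhs => rw [← Finset.univ_sum_single v]
        refine Finset.sum_congr rfl fun i _ => ?_
        rw [← Pi.single_smul, smul_eq_mul, mul_one]
      conv_lhs => rw [hv]
      rw [map_sum]
      refine Finset.sum_congr rfl fun i _ => ?_
      rw [map_smul, smul_eq_mul]
    -- φ vanishes on `Ψ '' Sig`
    have hvan : ∀ x ∈ Sig, ∑ i, f i x * c i = 0 := by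
      intro x hx
      have : φ (Ψ x) = 0 := by
        have h1 : Ψ x ∈ Submodule.span ℝ (Ψ '' (Sig : Set X)) :=
          Submodule.subset_span ⟨x, hx, rfl⟩
        have h2 : φ (Ψ x) ∈ (Submodule.span ℝ (Ψ '' (Sig : Set X))).map φ :=
          ⟨Ψ x, h1, rfl⟩
        rw [hφ] at h2
        simpa using h2
      rw [hφx] at this
      exact this
    -- hence on all of X, using finite index
    have hvanX : ∀ x : X, ∑ i, c i * f i x = 0 := by
      intro x
      have hx : Sig.index • x ∈ Sig := AddSubgroup.nsmul_index_mem Sig x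
      have h0 := hvan _ hx
      have : ∑ i, f i (Sig.index • x) * c i = (Sig.index : ℝ) * ∑ i, c i * f i x := by
        rw [Finset.mul_sum]
        refine Finset.sum_congr rfl fun i _ => ?_
        rw [map_nsmul, nsmul_eq_mul]
        ring
      rw [this] at h0
      have hne : (Sig.index : ℝ) ≠ 0 := Nat.cast_ne_zero.mpr hfin
      exact (mul_eq_zero.mp h0).resolve_left hne
    -- linear independence forces c = 0
    have hc0 : ∀ i, c i = 0 := by
      refine Fintype.linearIndependent_iff.mp hind c ?_
      funext x
      rw [Finset.sum_apply]
      simpa [smul_eq_mul] using hvanX x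
    refine hφ0 ?_
    refine LinearMap.ext fun v => ?_
    simp [hφx v, hc0]
  -- Step 2 : write `(-1,…,-1)` as a real combination of points of `Ψ '' Sig`
  have hmem : (fun _ : Fin r => (-1 : ℝ)) ∈ Submodule.span ℝ (Ψ '' (Sig : Set X)) := by
    rw [hspan]; trivial
  obtain ⟨m, a, v, hv⟩ := Submodule.mem_span_set'.mp hmem
  have hvex : ∀ j, ∃ s, s ∈ Sig ∧ Ψ s = (v j : Fin r → ℝ) := by
    intro j
    obtain ⟨s, hs, hs'⟩ := (v j).2
    exact ⟨s, hs, hs'⟩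
  choose σ hσ1 hσ2 using hvex
  have hkey : ∀ i, ∑ j, a j * f i (σ j) = -1 := by
    intro i
    have h := congrFun hv i
    rw [Finset.sum_apply] at h
    calc ∑ j, a j * f i (σ j) = ∑ j, (a j • (v j : Fin r → ℝ)) i := by
          refine Finset.sum_congr rfl fun j _ => ?_
          rw [Pi.smul_apply, smul_eq_mul, ← hσ2 j]
          rfl
      _ = -1 := h
  -- Step 3 : produce an element of Sig on which every `f i` is negative
  set C : ℝ := ∑ i, ∑ j, |f i (σ j)| with hCdef
  obtain ⟨N, hN⟩ := exists_nat_gt C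
  set x₀ : X := ∑ j, ⌊(N : ℝ) * a j⌋ • σ j with hx₀def
  have hx₀mem : x₀ ∈ Sig :=
    sum_mem fun j _ => zsmul_mem (hσ1 j) _
  have hx₀neg : ∀ i, f i x₀ < 0 := by
    intro i
    have hfx : f i x₀ = ∑ j, ((⌊(N : ℝ) * a j⌋ : ℝ)) * f i (σ j) := by
      rw [hx₀def, map_sum]
      refine Finset.sum_congr rfl fun j _ => ?_
      rw [map_zsmul, zsmul_eq_mul]
    have hsplit : f i x₀ =
        (∑ j, ((⌊(N : ℝ) * a j⌋ : ℝ) - (N : ℝ) * a j) * f i (σ j)) +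
          ∑ j, ((N : ℝ) * a j) * f i (σ j) := by
      rw [hfx, ← Finset.sum_add_distrib]
      refine Finset.sum_congr rfl fun j _ => ?_
      ring
    have h1 : ∑ j, ((N : ℝ) * a j) * f i (σ j) = -(N : ℝ) := by
      have : ∑ j, ((N : ℝ) * a j) * f i (σ j) = (N : ℝ) * ∑ j, a j * f i (σ j) := by
        rw [Finset.mul_sum]
        refine Finset.sum_congr rfl fun j _ => ?_
        ring
      rw [this, hkey i, mul_neg_one]
    have h2 : ∑ j, ((⌊(N : ℝ) * a j⌋ : ℝ) - (N : ℝ) * a j) * f i (σ j)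
        ≤ ∑ j, |f i (σ j)| := by
      refine Finset.sum_le_sum fun j _ => ?_
      have hb : |(⌊(N : ℝ) * a j⌋ : ℝ) - (N : ℝ) * a j| ≤ 1 := by
        rw [abs_le]
        constructor
        · linarith [Int.sub_one_lt_floor ((N : ℝ) * a j)]
        · linarith [Int.floor_le ((N : ℝ) * a j)]
      calc ((⌊(N : ℝ) * a j⌋ : ℝ) - (N : ℝ) * a j) * f i (σ j)
          ≤ |((⌊(N : ℝ) * a j⌋ : ℝ) - (N : ℝ) * a j) * f i (σ j)| := le_abs_self _
        _ = |(⌊(N : ℝ) * a j⌋ : ℝ) - (N : ℝ) * a j| * |f i (σ j)| := abs_mul _ _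
        _ ≤ 1 * |f i (σ j)| := by
            exact mul_le_mul_of_nonneg_right hb (abs_nonneg _)
        _ = |f i (σ j)| := one_mul _
    have h3 : ∑ j, |f i (σ j)| ≤ C := by
      rw [hCdef]
      refine Finset.single_le_sum (f := fun i => ∑ j, |f i (σ j)|) ?_ (Finset.mem_univ i)
      intro k _
      exact Finset.sum_nonneg fun j _ => abs_nonneg _
    rw [hsplit, h1]
    have : (∑ j, ((⌊(N : ℝ) * a j⌋ : ℝ) - (N : ℝ) * a j) * f i (σ j)) < (N : ℝ) :=
      lt_of_le_of_lt h2 (lt_of_le_of_lt h3 hN)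
    linarith
  refine ⟨⟨x₀, hx₀mem, hx₀neg⟩, ?_⟩
  -- Step 4 : the basis
  set L : X →ₗ[ℤ] ℚ ⊗[ℤ] X := TensorProduct.mk ℤ ℚ X 1 with hLdef
  have hLcoe : (fun x : X => ((1 : ℚ) ⊗ₜ[ℤ] x : ℚ ⊗[ℤ] X)) = ⇑L := rfl
  obtain ⟨t, hts, htspan, htind⟩ := exists_linearIndependent ℚ (⇑L '' (Sig : Set X))
  have htfin : t.Finite := htind.setFinite
  haveI := htfin.fintype
  set n : ℕ := Fintype.card t with hndef
  set e : Fin n ≃ t := (Fintype.equivFin t).symm with hedef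
  set w : Fin n → ℚ ⊗[ℤ] X := fun k => (e k : ℚ ⊗[ℤ] X) with hwdef
  have hw : LinearIndependent ℚ w := htind.comp e e.injective
  have hrange : Set.range w = t := by
    have h1 : Set.range w = Subtype.val '' Set.range e :=
      Set.range_comp Subtype.val e
    rw [h1, Equiv.range_eq_univ, Set.image_univ, Subtype.range_coe]
  have hτex : ∀ k, ∃ s, s ∈ Sig ∧ L s = w k := by
    intro k
    have : w k ∈ t := by rw [← hrange]; exact Set.mem_range_self k
    obtain ⟨s, hs, hs'⟩ := hts this
    exact ⟨s, hs, hs'⟩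
  choose τ hτ1 hτ2 using hτex
  set z : ℚ ⊗[ℤ] X := L x₀ with hzdef
  have hzmem : z ∈ Submodule.span ℚ (Set.range w) := by
    rw [hrange, htspan]
    exact Submodule.subset_span ⟨x₀, hx₀mem, rfl⟩
  obtain ⟨q, hq⟩ := (Submodule.mem_span_range_iff_exists_fun ℚ).mp hzmem
  set Q : ℚ := ∑ k, q k with hQdef
  -- choose the shift M
  have hNfex : ∀ p : Fin r × Fin n, ∃ Np : ℕ, f p.1 (τ p.2) < (Np : ℝ) * (-(f p.1 x₀)) := by
    intro p
    obtain ⟨Np, h⟩ := exists_nat_gt (f p.1 (τ p.2) / (-(f p.1 x₀)))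
    refine ⟨Np, ?_⟩
    have hpos : 0 < -(f p.1 x₀) := by linarith [hx₀neg p.1]
    exact (div_lt_iff₀ hpos).mp h
  choose Nf hNf using hNfex
  set M₁ : ℕ := Finset.univ.sup Nf with hM₁def
  set M : ℕ := if (1 : ℚ) + (M₁ : ℚ) * Q = 0 then M₁ + 1 else M₁ with hMdef
  have hM₁le : M₁ ≤ M := by
    rw [hMdef]; split_ifs <;> omega
  have hMne : (1 : ℚ) + (M : ℚ) * Q ≠ 0 := by
    rw [hMdef]
    split_ifs with h
    · intro h'
      push_cast at h'
      have hQ0 : Q ≠ 0 := by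
        intro hQ; rw [hQ] at h; simpa using h
      have : ((M₁ : ℚ) + 1) * Q = (M₁ : ℚ) * Q + Q := by ring
      rw [this] at h'
      have : Q = 0 := by linarith [h, h']
      exact hQ0 this
    · exact h
  -- negativity of the shifted vectors
  have hMneg : ∀ i k, f i (τ k + M • x₀) < 0 := by
    intro i k
    have h1 : f i (τ k + M • x₀) = f i (τ k) + (M : ℝ) * f i x₀ := by
      rw [map_add, map_nsmul, nsmul_eq_mul]
    have h2 : (Nf (i, k) : ℝ) ≤ (M : ℝ) := by
      have : Nf (i, k) ≤ M := le_trans (Finset.le_sup (Finset.mem_univ (i, k))) hM₁le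
      exact_mod_cast this
    have hpos : 0 < -(f i x₀) := by linarith [hx₀neg i]
    have h3 : f i (τ k) < (M : ℝ) * (-(f i x₀)) :=
      lt_of_lt_of_le (hNf (i, k)) (mul_le_mul_of_nonneg_right h2 hpos.le)
    rw [h1]; linarith
  set g : Fin n → X := fun k => τ k + M • x₀ with hgdef
  set u : Fin n → ℚ ⊗[ℤ] X := fun k => L (g k) with hudef
  set c : ℚ := (M : ℚ) with hcdef
  have hu : ∀ k, u k = w k + c • z := by
    intro k
    rw [hudef]
    simp only [hgdef, map_add, map_nsmul, hτ2]
    rw [← Nat.cast_smul_eq_nsmul ℚ M (L x₀), hcdef, hzdef]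
  -- linear independence of u
  have hulin : LinearIndependent ℚ u := by
    rw [Fintype.linearIndependent_iff]
    intro lam hlam
    set S : ℚ := ∑ k, lam k with hSdef
    have hexp : ∑ k, (lam k + S * c * q k) • w k = 0 := by
      have e1 : ∑ k, lam k • u k = ∑ k, lam k • w k + (S * c) • z := by
        have hterm : ∀ k, lam k • u k = lam k • w k + (lam k * c) • z := fun k => by
          rw [hu k, smul_add, smul_smul]
        rw [Finset.sum_congr rfl fun k _ => hterm k, Finset.sum_add_distrib,
          ← Finset.sum_smul, ← Finset.sum_mul, ← hSdef]
      have e2 : (S * c) • z = ∑ k, (S * c * q k) • w k := by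
        rw [← hq, Finset.smul_sum]
        refine Finset.sum_congr rfl fun k _ => ?_
        rw [smul_smul]
      rw [← hlam, e1, e2, ← Finset.sum_add_distrib]
      refine Finset.sum_congr rfl fun k _ => ?_
      rw [add_smul]
    have hcoef : ∀ k, lam k + S * c * q k = 0 :=
      Fintype.linearIndependent_iff.mp hw _ hexp
    have hS0 : S = 0 := by
      have hsum : S + S * c * Q = 0 := by
        have h := Finset.sum_eq_zero (s := Finset.univ) fun k _ => hcoef k
        rw [Finset.sum_add_distrib, ← Finset.mul_sum, ← hSdef, ← hQdef] at h
        exact h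
      have : S * ((1 : ℚ) + c * Q) = 0 := by
        rw [mul_add, mul_one, ← mul_assoc]; exact hsum
      rcases mul_eq_zero.mp this with h | h
      · exact h
      · exact absurd h hMne
    intro k
    have := hcoef k
    rw [hS0] at this
    simpa using this
  have hginj : Function.Injective g := by
    intro a b hab
    exact hulin.injective (by rw [hudef]; simp only; rw [hab])
  refine ⟨Set.range g, ?_, ?_, ?_⟩
  · rintro x ⟨k, rfl⟩
    exact ⟨AddSubgroup.add_mem Sig (hτ1 k) (AddSubgroup.nsmul_mem Sig hx₀mem M),
      fun i => hMneg i k⟩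
  · exact (linearIndependent_equiv' (Equiv.ofInjective g hginj)
      (funext fun k => rfl : (fun x : Set.range g => ((1 : ℚ) ⊗ₜ[ℤ] (x : X) : ℚ ⊗[ℤ] X)) ∘
        (Equiv.ofInjective g hginj) = u)).mp hulin
  · have himg : (fun x : X => ((1 : ℚ) ⊗ₜ[ℤ] x : ℚ ⊗[ℤ] X)) '' Set.range g = Set.range u := by
      rw [hLcoe, ← Set.range_comp]
      rfl
    have hzu : z ∈ Submodule.span ℚ (Set.range u) := by
      have hsum : ∑ k, q k • u k = ((1 : ℚ) + c * Q) • z := by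
        have : ∑ k, q k • u k = ∑ k, q k • w k + (∑ k, q k) • (c • z) := by
          rw [Finset.sum_smul, ← Finset.sum_add_distrib]
          refine Finset.sum_congr rfl fun k _ => ?_
          rw [hu k, smul_add]
        rw [this, hq, ← hQdef, smul_smul, mul_comm Q c, add_smul, one_smul]
      have hmem' : ((1 : ℚ) + c * Q) • z ∈ Submodule.span ℚ (Set.range u) := by
        rw [← hsum]
        exact Submodule.sum_mem _ fun k _ =>
          Submodule.smul_mem _ _ (Submodule.subset_span (Set.mem_range_self k))
      have := Submodule.smul_mem _ ((1 : ℚ) + c * Q)⁻¹ hmem'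
      rwa [inv_smul_smul₀ hMne] at this
    have hspan_eq : Submodule.span ℚ (Set.range u) = Submodule.span ℚ (Set.range w) := by
      apply le_antisymm
      · rw [Submodule.span_le]
        rintro _ ⟨k, rfl⟩
        rw [hu k]
        exact Submodule.add_mem _ (Submodule.subset_span (Set.mem_range_self k))
          (Submodule.smul_mem _ _ hzmem)
      · rw [Submodule.span_le]
        rintro _ ⟨k, rfl⟩
        have : w k = u k - c • z := by rw [hu k]; abel
        rw [this]
        exact Submodule.sub_mem _ (Submodule.subset_span (Set.mem_range_self k))
          (Submodule.smul_mem _ _ hzu)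
    rw [himg, hspan_eq, hrange, htspan, hLcoe]
end
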